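/- arXiv:1005.1520 — 2 statements merged into one kernel-verified Lean document; each statement's English description precedes it below -/
import Mathlib

section
/- The forgetful functor from the category Cat of small categories and functors to the category Quiv of quivers and quiver morphisms is monadic; its left adjoint is the path category (free category) functor. -/
open CategoryTheory

universe v u

namespace Stmt2Aux

lemma map_heq {V W : Type*} [Quiver V] [Quiver W] {F G : Prefunctor V W} (h : F = G)
    {X Y : V} (f : X ⟶ Y) : HEq (F.map f) (G.map f) := by subst h; rfl

lemma mapPath_id {V : Type*} [Quiver V] {X Y : V} (p : Quiver.Path X Y) :
    (𝟭q V).mapPath p = p := by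
  induction p with
  | nil => rfl
  | cons p e ih => rw [Prefunctor.mapPath_cons, ih]; rfl

instance : Quiv.forget.{max u v, u}.Faithful where
  map_injective {C D} F G h := by
    apply Cat.Hom.ext
    exact CategoryTheory.Functor.hext (fun (X : ↑C) => congrArg (fun p : Prefunctor C D => p.obj X) h)
      (fun X Y f => map_heq h f)


noncomputable instance full : (Monad.comparison Quiv.adj.{max u v, u}).Full where
  map_surjective {C D} h := by
    obtain ⟨f, hf⟩ := h
    let fq : Quiv.of ↑C ⟶ Quiv.of ↑D := f
    let f' : Prefunctor ↑C ↑D := fq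
    have hh : ((Quiv.forget.map (Cat.free.map fq)) : Prefunctor (Paths ↑C) (Paths ↑D)).comp
          (pathComposition ↑D).toPrefunctor
        = (pathComposition ↑C).toPrefunctor.comp f' := hf
    have key : ∀ {X Y : ↑C} (p : Quiver.Path X Y),
        composePath (f'.mapPath p)
          = f'.map (composePath p) := by
      intro X Y p
      exact eq_of_heq (map_heq hh p)
    refine ⟨⟨{ obj := f'.obj, map := f'.map, map_id := ?_, map_comp := ?_ }⟩, ?_⟩
    · intro X
      have := key (Quiver.Path.nil : Quiver.Path X X)
      simpa [mapPath_id] using this.symm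
    · intro X Y Z g1 g2
      have := key ((g1.toPath).comp g2.toPath)
      simpa [mapPath_id, Prefunctor.mapPath_comp, composePath_comp, composePath_toPath,
        Prefunctor.mapPath_toPath] using this.symm
    · apply Monad.Algebra.Hom.ext
      rfl


noncomputable instance essSurj : (Monad.comparison Quiv.adj.{max u v, u}).EssSurj where
  mem_essImage A := by
    obtain ⟨⟨Vt, qV⟩, a, hu, ha⟩ := A
    obtain ⟨aobj, amap⟩ := a
    have hobj : aobj = _root_.id := by
      funext X
      exact congrArg (fun (p : Prefunctor Vt Vt) => p.obj X)
        (show ((Paths.of Vt).comp (⟨aobj, @amap⟩ : Prefunctor (Paths Vt) Vt) : Prefunctor Vt Vt) = 𝟭q Vt from hu)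
    subst hobj
    -- the structure map as a plain prefunctor
    let aP : Prefunctor (Paths Vt) Vt := ⟨_root_.id, @amap⟩
    have h1 : ∀ {X Y : Vt} (f : X ⟶ Y), aP.map f.toPath = f := by
      intro X Y f
      exact eq_of_heq (map_heq
        (show (Paths.of Vt).comp aP = 𝟭q Vt from hu) f)
    have h2 : ∀ {X Y : Paths (Paths Vt)} (P : X ⟶ Y),
        aP.map (composePath P) = aP.map (aP.mapPath P) := by
      intro X Y P
      exact eq_of_heq (map_heq (V := Paths (Paths Vt)) (W := Vt) ha P)
    let toP : ∀ {X Y : Vt}, Quiver.Path X Y → ((Paths.of Vt).obj X ⟶ (Paths.of Vt).obj Y) :=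
      fun p => p
    have factA : ∀ {X Y Z : Vt} (p : Quiver.Path X Y) (q : Quiver.Path Y Z),
        aP.map (((aP.map p).toPath).comp (aP.map q).toPath) = aP.map (p.comp q) := by
      intro X Y Z p q
      have := h2 ((Quiver.Path.nil.cons (toP p)).cons (toP q))
      simp only [Prefunctor.mapPath_cons, Prefunctor.mapPath_nil, mapPath_id,
        composePath_cons, composePath_nil, Category.id_comp] at this
      exact this.symm
    let cmp : ∀ {X Y Z : Vt}, (X ⟶ Y) → (Y ⟶ Z) → (X ⟶ Z) :=
      fun f g => aP.map (toP (f.toPath.comp g.toPath))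
    let idm : ∀ X : Vt, X ⟶ X := fun X => aP.map (toP Quiver.Path.nil)
    have factB : ∀ {X Y Z : Vt} (p : Quiver.Path X Y) (q : Quiver.Path Y Z),
        cmp (aP.map p) (aP.map q) = aP.map (p.comp q) := fun p q => factA p q
    have idc : ∀ {X Y : Vt} (f : X ⟶ Y), cmp (idm X) f = f := by
      intro X Y f
      rw [← h1 f]
      have := factB Quiver.Path.nil f.toPath
      rwa [Quiver.Path.nil_comp] at this
    have cid : ∀ {X Y : Vt} (f : X ⟶ Y), cmp f (idm Y) = f := by
      intro X Y f
      rw [← h1 f]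
      have := factB f.toPath Quiver.Path.nil
      rwa [Quiver.Path.comp_nil] at this
    have casc : ∀ {W X Y Z : Vt} (f : W ⟶ X) (g : X ⟶ Y) (h : Y ⟶ Z),
        cmp (cmp f g) h = cmp f (cmp g h) := by
      intro W X Y Z f g h
      rw [← h1 f, ← h1 g, ← h1 h]
      calc cmp (cmp (aP.map f.toPath) (aP.map g.toPath)) (aP.map h.toPath)
          = cmp (aP.map (f.toPath.comp g.toPath)) (aP.map h.toPath) := by
            rw [factB f.toPath g.toPath]
        _ = aP.map ((f.toPath.comp g.toPath).comp h.toPath) := factB _ _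
        _ = aP.map (f.toPath.comp (g.toPath.comp h.toPath)) := by
            rw [Quiver.Path.comp_assoc]
        _ = cmp (aP.map f.toPath) (aP.map (g.toPath.comp h.toPath)) := (factB _ _).symm
        _ = cmp (aP.map f.toPath) (cmp (aP.map g.toPath) (aP.map h.toPath)) := by
            rw [factB g.toPath h.toPath]
    letI instC : Category.{max u v} Vt :=
      { Hom := fun X Y => (X ⟶ Y)
        id := idm
        comp := fun f g => cmp f g
        id_comp := fun f => idc f
        comp_id := fun f => cid f
        assoc := fun f g h => casc f g h }
    have hmap : ∀ {X Y : Vt} (P : Quiver.Path X Y),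
        composePath (C := Vt) (X := X) (Y := Y) P = aP.map (toP P) := by
      intro X Y P
      induction P with
      | nil => rfl
      | cons p e ih =>
        show cmp (composePath (C := Vt) p) e = aP.map (toP (p.cons e))
        rw [ih]
        exact (congrArg (cmp (aP.map (toP p))) (h1 e).symm).trans (factB _ _)
    have hKa : (Quiv.forget.map (Quiv.adj.counit.app (Cat.of Vt)) : Prefunctor (Paths Vt) Vt)
        = aP := by
      fapply Prefunctor.ext
      · intro X
        rfl
      · intro X Y p
        show composePath (C := Vt) p = aP.map p
        exact hmap p
    refine ⟨Cat.of Vt, ⟨Monad.Algebra.isoMk (Iso.refl _) ?_⟩⟩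
    simp only [Iso.refl_hom, CategoryTheory.Functor.map_id, Category.id_comp, Category.comp_id]
    exact ((congrArg (fun t => t ≫ _) (CategoryTheory.Functor.map_id _ _)).trans (Category.id_comp _)).trans
      (hKa.symm.trans (Category.comp_id _).symm)




noncomputable instance : (Monad.comparison Quiv.adj.{max u v, u}).IsEquivalence where

end Stmt2Aux

/-- The forgetful functor `Cat ⥤ Quiv` from small categories to quivers
is monadic, and its left adjoint is the path category (free category) functor. -/
theorem stmt2 :
    ∃ M : MonadicRightAdjoint Quiv.forget, M.L = Cat.free := by
  exact ⟨{ L := Cat.free, adj := Quiv.adj, eqv := inferInstance }, rfl⟩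
end

section
/- Let W be a ⊗-distributive monoidal category. Then 𝒢(W) is a ⊗-distributive monoidal category with tensor product given by (A⊗B)₀ = A₀ × B₀ and (A⊗B)((x,y),(x',y')) = A(x,x') ⊗ B(y,y'); moreover, if W is symmetric monoidal then so is 𝒢(W). -/
open CategoryTheory CategoryTheory.Limits CategoryTheory.MonoidalCategory

universe v u

/-- A `W`-graph: a set of vertices together with a `W`-object of edges
between any two vertices. -/
structure WGraph (W : Type u) [Category.{v} W] : Type (max u 1) where
  V : Type
  hom : V → V → W

namespace WGraph

variable {W : Type u} [Category.{v} W]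

/-- A morphism of `W`-graphs. -/
structure Hom (A B : WGraph W) where
  f0 : A.V → B.V
  f : ∀ x y : A.V, A.hom x y ⟶ B.hom (f0 x) (f0 y)

theorem Hom.ext' {A B : WGraph W} {F G : Hom A B} (h0 : F.f0 = G.f0)
    (h : ∀ x y, HEq (F.f x y) (G.f x y)) : F = G := by
  cases F with
  | mk F0 Ff =>
    cases G with
    | mk G0 Gf =>
      cases h0
      simp only [Hom.mk.injEq, heq_eq_eq, true_and]
      funext x y
      exact eq_of_heq (h x y)

instance : Category (WGraph W) where
  Hom := Hom
  id A := ⟨_root_.id, fun _ _ => 𝟙 _⟩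
  comp F G := ⟨G.f0 ∘ F.f0, fun x y => F.f x y ≫ G.f _ _⟩
  id_comp F := Hom.ext' rfl (fun x y => heq_of_eq (by simp))
  comp_id F := Hom.ext' rfl (fun x y => heq_of_eq (by simp))
  assoc F G H := Hom.ext' rfl (fun x y => heq_of_eq (by simp))

@[simp] theorem id_f0 (A : WGraph W) : Hom.f0 (𝟙 A) = _root_.id := rfl
@[simp] theorem comp_f0 {A B C : WGraph W} (F : A ⟶ B) (G : B ⟶ C) :
    (F ≫ G).f0 = G.f0 ∘ F.f0 := rfl
@[simp] theorem id_f (A : WGraph W) (x y : A.V) : Hom.f (𝟙 A) x y = 𝟙 (A.hom x y) := rfl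
@[simp] theorem comp_f {A B C : WGraph W} (F : A ⟶ B) (G : B ⟶ C) (x y : A.V) :
    (F ≫ G).f x y = F.f x y ≫ G.f (F.f0 x) (F.f0 y) := rfl

end WGraph

/-- A small `W`-enriched category, bundled. -/
structure WCat (W : Type u) [Category.{v} W] [MonoidalCategory W] : Type (max u v 1) where
  α : Type
  [str : EnrichedCategory W α]

namespace WCat

variable {W : Type u} [Category.{v} W] [MonoidalCategory W]

attribute [instance] WCat.str

theorem efunctor_ext {C D : Type} [EnrichedCategory W C] [EnrichedCategory W D]
    {F G : EnrichedFunctor W C D} (h0 : F.obj = G.obj)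
    (h : ∀ x y, HEq (F.map x y) (G.map x y)) : F = G := by
  cases F with
  | mk F0 Ff _ _ =>
    cases G with
    | mk G0 Gf _ _ =>
      cases h0
      simp only [EnrichedFunctor.mk.injEq, heq_eq_eq, true_and]
      funext x y
      exact eq_of_heq (h x y)

instance : Category (WCat W) where
  Hom A B := EnrichedFunctor W A.α B.α
  id A := EnrichedFunctor.id W A.α
  comp F G := F.comp W G
  id_comp F := efunctor_ext rfl (fun x y => heq_of_eq (Category.id_comp _))
  comp_id F := efunctor_ext rfl (fun x y => heq_of_eq (Category.comp_id _))
  assoc F G H := efunctor_ext rfl (fun x y => heq_of_eq (Category.assoc _ _ _))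

end WCat

/-- The forgetful functor from small `W`-categories to `W`-graphs. -/
def forgetW (W : Type u) [Category.{v} W] [MonoidalCategory W] :
    WCat W ⥤ WGraph W where
  obj A := ⟨A.α, fun x y => x ⟶[W] y⟩
  map F := ⟨F.obj, F.map⟩
  map_id A := rfl
  map_comp F G := rfl

/-- A monoidal category is `⊗`-distributive if it has small coproducts and these
are preserved by tensoring on either side. -/
class TensorDistributive (W : Type u) [Category.{v} W] [MonoidalCategory W] : Prop where
  hasCoproducts : HasCoproducts.{0} W
  preservesLeft : ∀ (X : W) (J : Type),
    PreservesColimitsOfShape (Discrete J) (tensorLeft X)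
  preservesRight : ∀ (X : W) (J : Type),
    PreservesColimitsOfShape (Discrete J) (tensorRight X)

attribute [instance] TensorDistributive.hasCoproducts

/-- A chain from `x` to `y` in a `W`-graph `A`: a sequence
`x = z 0, z 1, …, z n = y` of vertices. -/
structure WGraph.Chain {W : Type u} [Category.{v} W] (A : WGraph W) (x y : A.V) where
  n : ℕ
  z : Fin (n + 1) → A.V
  hx : z 0 = x
  hy : z (Fin.last n) = y

/-- The tensor product `A(z_{n-1}, z_n) ⊗ ⋯ ⊗ A(z_0, z_1)` of the hom-objects along a
chain of vertices; for `n = 0` it is the unit object of `W`. -/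
def WGraph.chainTensor {W : Type u} [Category.{v} W] [MonoidalCategory W] (A : WGraph W) :
    ∀ n : ℕ, (Fin (n + 1) → A.V) → W
  | 0, _ => 𝟙_ W
  | n + 1, z =>
      A.hom (z (Fin.castSucc (Fin.last n))) (z (Fin.last (n + 1)))
        ⊗ WGraph.chainTensor A n (fun i => z i.castSucc)
namespace WGraph

variable {W : Type u} [Category.{v} W] [MonoidalCategory W]

instance monStruct : MonoidalCategoryStruct (WGraph W) where
  tensorObj A B := ⟨A.V × B.V, fun p q => A.hom p.1 q.1 ⊗ B.hom p.2 q.2⟩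
  whiskerLeft A _ _ g :=
    ⟨fun p => (p.1, g.f0 p.2), fun p q => A.hom p.1 q.1 ◁ g.f p.2 q.2⟩
  whiskerRight f B :=
    ⟨fun p => (f.f0 p.1, p.2), fun p q => f.f p.1 q.1 ▷ B.hom p.2 q.2⟩
  tensorHom f g := ⟨fun p => (f.f0 p.1, g.f0 p.2), fun p q => f.f p.1 q.1 ⊗ₘ g.f p.2 q.2⟩
  tensorUnit := ⟨PUnit, fun _ _ => 𝟙_ W⟩
  associator A B C :=
    { hom := ⟨fun p => (p.1.1, (p.1.2, p.2)), fun p q => (α_ _ _ _).hom⟩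
      inv := ⟨fun p => ((p.1, p.2.1), p.2.2), fun p q => (α_ _ _ _).inv⟩
      hom_inv_id := Hom.ext' rfl (fun p q => heq_of_eq (by simp))
      inv_hom_id := Hom.ext' rfl (fun p q => heq_of_eq (by simp)) }
  leftUnitor A :=
    { hom := ⟨fun p => p.2, fun p q => (λ_ _).hom⟩
      inv := ⟨fun x => (PUnit.unit, x), fun x y => (λ_ _).inv⟩
      hom_inv_id := Hom.ext' rfl (fun p q => heq_of_eq (by simp))
      inv_hom_id := Hom.ext' rfl (fun p q => heq_of_eq (by simp)) }
  rightUnitor A :=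
    { hom := ⟨fun p => p.1, fun p q => (ρ_ _).hom⟩
      inv := ⟨fun x => (x, PUnit.unit), fun x y => (ρ_ _).inv⟩
      hom_inv_id := Hom.ext' rfl (fun p q => heq_of_eq (by simp))
      inv_hom_id := Hom.ext' rfl (fun p q => heq_of_eq (by simp)) }


@[simp] theorem tensorObj_V (A B : WGraph W) : (A ⊗ B).V = (A.V × B.V) := rfl
@[simp] theorem tensorObj_hom (A B : WGraph W) (p q : A.V × B.V) :
    (A ⊗ B).hom p q = A.hom p.1 q.1 ⊗ B.hom p.2 q.2 := rfl
@[simp] theorem tensorUnit_V : (𝟙_ (WGraph W)).V = PUnit := rfl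
@[simp] theorem tensorUnit_hom (p q : (𝟙_ (WGraph W)).V) :
    (𝟙_ (WGraph W)).hom p q = 𝟙_ W := rfl
@[simp] theorem whiskerLeft_f0 (A : WGraph W) {B₁ B₂ : WGraph W} (g : B₁ ⟶ B₂)
    (p : (A ⊗ B₁).V) : (A ◁ g).f0 p = (p.1, g.f0 p.2) := rfl
@[simp] theorem whiskerLeft_f (A : WGraph W) {B₁ B₂ : WGraph W} (g : B₁ ⟶ B₂)
    (p q : (A ⊗ B₁).V) : (A ◁ g).f p q = A.hom p.1 q.1 ◁ g.f p.2 q.2 := rfl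
@[simp] theorem whiskerRight_f0 {A₁ A₂ : WGraph W} (f : A₁ ⟶ A₂) (B : WGraph W)
    (p : (A₁ ⊗ B).V) : (f ▷ B).f0 p = (f.f0 p.1, p.2) := rfl
@[simp] theorem whiskerRight_f {A₁ A₂ : WGraph W} (f : A₁ ⟶ A₂) (B : WGraph W)
    (p q : (A₁ ⊗ B).V) : (f ▷ B).f p q = f.f p.1 q.1 ▷ B.hom p.2 q.2 := rfl
@[simp] theorem tensorHom_f0 {A₁ B₁ A₂ B₂ : WGraph W} (f : A₁ ⟶ B₁) (g : A₂ ⟶ B₂)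
    (p : (A₁ ⊗ A₂).V) : (f ⊗ₘ g).f0 p = (f.f0 p.1, g.f0 p.2) := rfl
@[simp] theorem tensorHom_f {A₁ B₁ A₂ B₂ : WGraph W} (f : A₁ ⟶ B₁) (g : A₂ ⟶ B₂)
    (p q : (A₁ ⊗ A₂).V) : (f ⊗ₘ g).f p q = f.f p.1 q.1 ⊗ₘ g.f p.2 q.2 := rfl
@[simp] theorem associator_hom_f0 (A B C : WGraph W) (p : ((A ⊗ B) ⊗ C).V) :
    (α_ A B C).hom.f0 p = (p.1.1, (p.1.2, p.2)) := rfl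
@[simp] theorem associator_hom_f (A B C : WGraph W) (p q : ((A ⊗ B) ⊗ C).V) :
    (α_ A B C).hom.f p q =
      (α_ (A.hom p.1.1 q.1.1) (B.hom p.1.2 q.1.2) (C.hom p.2 q.2)).hom := rfl
@[simp] theorem associator_inv_f0 (A B C : WGraph W) (p : (A ⊗ (B ⊗ C)).V) :
    (α_ A B C).inv.f0 p = ((p.1, p.2.1), p.2.2) := rfl
@[simp] theorem associator_inv_f (A B C : WGraph W) (p q : (A ⊗ (B ⊗ C)).V) :
    (α_ A B C).inv.f p q =
      (α_ (A.hom p.1 q.1) (B.hom p.2.1 q.2.1) (C.hom p.2.2 q.2.2)).inv := rfl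
@[simp] theorem leftUnitor_hom_f0 (A : WGraph W) (p : (𝟙_ (WGraph W) ⊗ A).V) :
    (λ_ A).hom.f0 p = p.2 := rfl
@[simp] theorem leftUnitor_hom_f (A : WGraph W) (p q : (𝟙_ (WGraph W) ⊗ A).V) :
    (λ_ A).hom.f p q = (λ_ (A.hom p.2 q.2)).hom := rfl
@[simp] theorem leftUnitor_inv_f0 (A : WGraph W) (x : A.V) :
    (λ_ A).inv.f0 x = (PUnit.unit, x) := rfl
@[simp] theorem leftUnitor_inv_f (A : WGraph W) (x y : A.V) :
    (λ_ A).inv.f x y = (λ_ (A.hom x y)).inv := rfl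
@[simp] theorem rightUnitor_hom_f0 (A : WGraph W) (p : (A ⊗ 𝟙_ (WGraph W)).V) :
    (ρ_ A).hom.f0 p = p.1 := rfl
@[simp] theorem rightUnitor_hom_f (A : WGraph W) (p q : (A ⊗ 𝟙_ (WGraph W)).V) :
    (ρ_ A).hom.f p q = (ρ_ (A.hom p.1 q.1)).hom := rfl
@[simp] theorem rightUnitor_inv_f0 (A : WGraph W) (x : A.V) :
    (ρ_ A).inv.f0 x = (x, PUnit.unit) := rfl
@[simp] theorem rightUnitor_inv_f (A : WGraph W) (x y : A.V) :
    (ρ_ A).inv.f x y = (ρ_ (A.hom x y)).inv := rfl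

instance monoidal : MonoidalCategory (WGraph W) where
  tensorHom_def f g := Hom.ext' rfl (fun p q => heq_of_eq (by simp [MonoidalCategory.tensorHom_def]))
  id_tensorHom_id A B := Hom.ext' rfl (fun p q => heq_of_eq (by simp))
  tensorHom_comp_tensorHom f₁ f₂ g₁ g₂ := Hom.ext' rfl (fun p q => heq_of_eq (by simp))
  whiskerLeft_id A B := Hom.ext' rfl (fun p q => heq_of_eq (by simp))
  id_whiskerRight A B := Hom.ext' rfl (fun p q => heq_of_eq (by simp))
  associator_naturality f₁ f₂ f₃ := Hom.ext' rfl
    (fun p q => heq_of_eq (by simp [associator_naturality]))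
  leftUnitor_naturality f := Hom.ext' rfl
    (fun p q => heq_of_eq (by simp [leftUnitor_naturality]))
  rightUnitor_naturality f := Hom.ext' rfl
    (fun p q => heq_of_eq (by simp [rightUnitor_naturality]))
  pentagon A B C D := Hom.ext' rfl (fun p q => heq_of_eq (by simp [pentagon]))
  triangle A B := Hom.ext' rfl (fun p q => heq_of_eq (by simp))

end WGraph
namespace WGraph

section Braided

variable {W : Type u} [Category.{v} W] [MonoidalCategory W] [BraidedCategory W]

instance braided : BraidedCategory (WGraph W) where
  braiding A B :=
    { hom := ⟨fun p => (p.2, p.1), fun p q => (β_ (A.hom p.1 q.1) (B.hom p.2 q.2)).hom⟩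
      inv := ⟨fun p => (p.2, p.1), fun p q => (β_ (A.hom p.2 q.2) (B.hom p.1 q.1)).inv⟩
      hom_inv_id := Hom.ext' rfl (fun p q => heq_of_eq (by simp))
      inv_hom_id := Hom.ext' rfl (fun p q => heq_of_eq (by simp)) }
  braiding_naturality_right := by
    intro A B₁ B₂ f
    exact Hom.ext' rfl (fun p q => heq_of_eq (by simp))
  braiding_naturality_left := by
    intro A₁ A₂ f B
    exact Hom.ext' rfl (fun p q => heq_of_eq (by simp))
  hexagon_forward A B C := Hom.ext' rfl
    (fun p q => heq_of_eq (by simp [BraidedCategory.hexagon_forward]))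
  hexagon_reverse A B C := Hom.ext' rfl
    (fun p q => heq_of_eq (by simp [BraidedCategory.hexagon_reverse]))

@[simp] theorem braiding_hom_f0 (A B : WGraph W) (p : (A ⊗ B).V) :
    (β_ A B).hom.f0 p = (p.2, p.1) := rfl
@[simp] theorem braiding_hom_f (A B : WGraph W) (p q : (A ⊗ B).V) :
    (β_ A B).hom.f p q = (β_ (A.hom p.1 q.1) (B.hom p.2 q.2)).hom := rfl

end Braided

instance symmetric {W : Type u} [Category.{v} W] [MonoidalCategory W]
    [SymmetricCategory W] : SymmetricCategory (WGraph W) where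
  symmetry A B := Hom.ext' rfl (fun p q => heq_of_eq (by simp))

end WGraph

namespace StmtFourAux

open CategoryTheory CategoryTheory.Limits CategoryTheory.MonoidalCategory WGraph

variable {W : Type u} [Category.{v} W] [MonoidalCategory W] [TensorDistributive W]

theorem homCongrF {A B : WGraph W} {F G : A ⟶ B} (h : F = G) (x y : A.V) :
    HEq (F.f x y) (G.f x y) := by subst h; rfl

section WHelpers

variable {J : Type} (Y : W) (H : J → W) {Z : W}

/-- The colimit cocone witnessing that tensoring on the left preserves coproducts. -/
noncomputable def ltIsColimit :
    IsColimit ((tensorLeft Y).mapCocone (Cofan.mk (∐ H) (Sigma.ι H))) :=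
  letI := TensorDistributive.preservesLeft (W := W) Y J
  isColimitOfPreserves (tensorLeft Y) (coproductIsCoproduct H)

noncomputable def ltDesc (g : ∀ j, Y ⊗ H j ⟶ Z) : Y ⊗ (∐ H) ⟶ Z :=
  (ltIsColimit Y H).desc ⟨Z, Discrete.natTrans fun j => g j.as⟩

theorem ltDesc_fac (g : ∀ j, Y ⊗ H j ⟶ Z) (j : J) :
    Y ◁ Sigma.ι H j ≫ ltDesc Y H g = g j :=
  (ltIsColimit Y H).fac _ ⟨j⟩

theorem ltHomExt {h k : Y ⊗ (∐ H) ⟶ Z}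
    (w : ∀ j, Y ◁ Sigma.ι H j ≫ h = Y ◁ Sigma.ι H j ≫ k) : h = k :=
  (ltIsColimit Y H).hom_ext fun ⟨j⟩ => w j

/-- The colimit cocone witnessing that tensoring on the right preserves coproducts. -/
noncomputable def rtIsColimit :
    IsColimit ((tensorRight Y).mapCocone (Cofan.mk (∐ H) (Sigma.ι H))) :=
  letI := TensorDistributive.preservesRight (W := W) Y J
  isColimitOfPreserves (tensorRight Y) (coproductIsCoproduct H)

noncomputable def rtDesc (g : ∀ j, H j ⊗ Y ⟶ Z) : (∐ H) ⊗ Y ⟶ Z :=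
  (rtIsColimit Y H).desc ⟨Z, Discrete.natTrans fun j => g j.as⟩

theorem rtDesc_fac (g : ∀ j, H j ⊗ Y ⟶ Z) (j : J) :
    Sigma.ι H j ▷ Y ≫ rtDesc Y H g = g j :=
  (rtIsColimit Y H).fac _ ⟨j⟩

theorem rtHomExt {h k : (∐ H) ⊗ Y ⟶ Z}
    (w : ∀ j, Sigma.ι H j ▷ Y ≫ h = Sigma.ι H j ▷ Y ≫ k) : h = k :=
  (rtIsColimit Y H).hom_ext fun ⟨j⟩ => w j

end WHelpers

section Coproducts

variable {J : Type} (f : J → WGraph W)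

/-- The coproduct of a family of `W`-graphs: vertices are the disjoint union, and
the edge object between vertices in different components is the initial object
(the empty coproduct), realized as a coproduct over `PLift (i = j)`. -/
noncomputable def sigmaGraph : WGraph W where
  V := Σ j, (f j).V
  hom p q := ∐ fun (h : PLift (p.1 = q.1)) => (f q.1).hom (h.down ▸ p.2) q.2

noncomputable def sigmaι (j : J) : f j ⟶ sigmaGraph f where
  f0 a := ⟨j, a⟩
  f a b := Sigma.ι (fun (h : PLift (j = j)) => (f j).hom (h.down ▸ a) b) ⟨rfl⟩

noncomputable def sigmaCofan : Cofan f := Cofan.mk (sigmaGraph f) (sigmaι f)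

variable {f}

noncomputable def descF (t : Cofan f) :
    ∀ (i j : J) (h : i = j) (a : (f i).V) (b : (f j).V),
      (f j).hom (h ▸ a) b ⟶ t.pt.hom ((t.inj i).f0 a) ((t.inj j).f0 b)
  | i, _, rfl, a, b => (t.inj i).f a b

noncomputable def descHom (t : Cofan f) : sigmaGraph f ⟶ t.pt where
  f0 p := (t.inj p.1).f0 p.2
  f p q := Sigma.desc fun h => descF t p.1 q.1 h.down p.2 q.2

noncomputable def sigmaCofanIsColimit : IsColimit (sigmaCofan f) :=
  mkCofanColimit _ (fun t => descHom t)
    (fun t j => by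
      refine Hom.ext' rfl fun a b => heq_of_eq ?_
      exact Sigma.ι_desc _ (PLift.up rfl))
    (fun t m hm => by
      obtain ⟨m0, mf⟩ := m
      have h0 : m0 = (descHom t).f0 := by
        funext p
        exact congrArg (fun (F : f p.1 ⟶ t.pt) => F.f0 p.2) (hm p.1)
      subst h0
      refine Hom.ext' rfl fun p q => heq_of_eq ?_
      refine Sigma.hom_ext _ _ fun h => ?_
      obtain ⟨i, a⟩ := p
      obtain ⟨j, b⟩ := q
      obtain ⟨(rfl : i = j)⟩ := h
      have h1 : Sigma.ι (fun (h : PLift (i = i)) => (f i).hom (h.down ▸ a) b) (PLift.up rfl) ≫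
          mf ⟨i, a⟩ ⟨i, b⟩ = (t.inj i).f a b :=
        eq_of_heq (homCongrF (hm i) a b)
      have h2 : Sigma.ι (fun (h : PLift (i = i)) => (f i).hom (h.down ▸ a) b) (PLift.up rfl) ≫
          (descHom t).f ⟨i, a⟩ ⟨i, b⟩ = (t.inj i).f a b :=
        Sigma.ι_desc _ (PLift.up rfl)
      exact h1.trans h2.symm)

theorem hasCoproductsWGraph : HasCoproducts.{0} (WGraph W) := fun J =>
  { has_colimit := fun K =>
      haveI : HasColimit (Discrete.functor (K.obj ∘ Discrete.mk)) :=
        HasColimit.mk ⟨_, sigmaCofanIsColimit (f := K.obj ∘ Discrete.mk)⟩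
      hasColimit_of_iso (Discrete.natIsoFunctor (F := K)) }

end Coproducts

section Preserve

variable {J : Type} {f : J → WGraph W} (X : WGraph W)

noncomputable def ltDescF (t : Cocone (Discrete.functor f ⋙ tensorLeft X)) :
    ∀ (x x' : X.V) (i j : J) (h : i = j) (a : (f i).V) (b : (f j).V),
      X.hom x x' ⊗ (f j).hom (h ▸ a) b ⟶
        t.pt.hom ((t.ι.app ⟨i⟩).f0 (x, a)) ((t.ι.app ⟨j⟩).f0 (x', b))
  | x, x', i, _, rfl, a, b => (t.ι.app ⟨i⟩).f (x, a) (x', b)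

noncomputable def ltDescHom (t : Cocone (Discrete.functor f ⋙ tensorLeft X)) :
    ((tensorLeft X).mapCocone (sigmaCofan f)).pt ⟶ t.pt where
  f0 p := (t.ι.app ⟨p.2.1⟩).f0 (p.1, p.2.2)
  f p q := ltDesc (X.hom p.1 q.1) _
    fun h => ltDescF X t p.1 q.1 p.2.1 q.2.1 h.down p.2.2 q.2.2

noncomputable def ltMapIsColimit :
    IsColimit ((tensorLeft X).mapCocone (sigmaCofan f)) where
  desc := ltDescHom X
  fac t := fun j => by
    obtain ⟨j⟩ := j
    refine Hom.ext' rfl fun p q => heq_of_eq ?_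
    exact ltDesc_fac (X.hom p.1 q.1)
      (fun (h : PLift (j = j)) => (f j).hom (h.down ▸ p.2) q.2)
      (fun h => ltDescF X t p.1 q.1 j j h.down p.2 q.2) (PLift.up rfl)
  uniq t m hm := by
    obtain ⟨m0, mf⟩ := m
    have h0 : m0 = (ltDescHom X t).f0 := by
      funext p
      exact congrArg (fun (F : _ ⟶ t.pt) => Hom.f0 F (p.1, p.2.2)) (hm ⟨p.2.1⟩)
    subst h0
    refine Hom.ext' rfl fun p q => heq_of_eq ?_
    refine ltHomExt _ _ fun h => ?_
    obtain ⟨x, i, a⟩ := p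
    obtain ⟨x', j, b⟩ := q
    obtain ⟨(rfl : i = j)⟩ := h
    have h1 : X.hom x x' ◁
          Sigma.ι (fun (h : PLift (i = i)) => (f i).hom (h.down ▸ a) b) (PLift.up rfl) ≫
          mf (x, ⟨i, a⟩) (x', ⟨i, b⟩) = (t.ι.app ⟨i⟩).f (x, a) (x', b) :=
      eq_of_heq (homCongrF (hm ⟨i⟩) (x, a) (x', b))
    have h2 : X.hom x x' ◁
          Sigma.ι (fun (h : PLift (i = i)) => (f i).hom (h.down ▸ a) b) (PLift.up rfl) ≫
          (ltDescHom X t).f (x, ⟨i, a⟩) (x', ⟨i, b⟩) = (t.ι.app ⟨i⟩).f (x, a) (x', b) :=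
      ltDesc_fac (X.hom x x') (fun (h : PLift (i = i)) => (f i).hom (h.down ▸ a) b)
        (fun h => ltDescF X t x x' i i h.down a b) (PLift.up rfl)
    exact h1.trans h2.symm

noncomputable def rtDescF (t : Cocone (Discrete.functor f ⋙ tensorRight X)) :
    ∀ (x x' : X.V) (i j : J) (h : i = j) (a : (f i).V) (b : (f j).V),
      (f j).hom (h ▸ a) b ⊗ X.hom x x' ⟶
        t.pt.hom ((t.ι.app ⟨i⟩).f0 (a, x)) ((t.ι.app ⟨j⟩).f0 (b, x'))
  | x, x', i, _, rfl, a, b => (t.ι.app ⟨i⟩).f (a, x) (b, x')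

noncomputable def rtDescHom (t : Cocone (Discrete.functor f ⋙ tensorRight X)) :
    ((tensorRight X).mapCocone (sigmaCofan f)).pt ⟶ t.pt where
  f0 p := (t.ι.app ⟨p.1.1⟩).f0 (p.1.2, p.2)
  f p q := rtDesc (X.hom p.2 q.2) _
    fun h => rtDescF X t p.2 q.2 p.1.1 q.1.1 h.down p.1.2 q.1.2

noncomputable def rtMapIsColimit :
    IsColimit ((tensorRight X).mapCocone (sigmaCofan f)) where
  desc := rtDescHom X
  fac t := fun j => by
    obtain ⟨j⟩ := j
    refine Hom.ext' rfl fun p q => heq_of_eq ?_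
    exact rtDesc_fac (X.hom p.2 q.2)
      (fun (h : PLift (j = j)) => (f j).hom (h.down ▸ p.1) q.1)
      (fun h => rtDescF X t p.2 q.2 j j h.down p.1 q.1) (PLift.up rfl)
  uniq t m hm := by
    obtain ⟨m0, mf⟩ := m
    have h0 : m0 = (rtDescHom X t).f0 := by
      funext p
      exact congrArg (fun (F : _ ⟶ t.pt) => Hom.f0 F (p.1.2, p.2)) (hm ⟨p.1.1⟩)
    subst h0
    refine Hom.ext' rfl fun p q => heq_of_eq ?_
    refine rtHomExt _ _ fun h => ?_
    obtain ⟨⟨i, a⟩, x⟩ := p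
    obtain ⟨⟨j, b⟩, x'⟩ := q
    obtain ⟨(rfl : i = j)⟩ := h
    have h1 : Sigma.ι (fun (h : PLift (i = i)) => (f i).hom (h.down ▸ a) b) (PLift.up rfl) ▷
          X.hom x x' ≫
          mf (⟨i, a⟩, x) (⟨i, b⟩, x') = (t.ι.app ⟨i⟩).f (a, x) (b, x') :=
      eq_of_heq (homCongrF (hm ⟨i⟩) (a, x) (b, x'))
    have h2 : Sigma.ι (fun (h : PLift (i = i)) => (f i).hom (h.down ▸ a) b) (PLift.up rfl) ▷
          X.hom x x' ≫
          (rtDescHom X t).f (⟨i, a⟩, x) (⟨i, b⟩, x') = (t.ι.app ⟨i⟩).f (a, x) (b, x') :=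
      rtDesc_fac (X.hom x x') (fun (h : PLift (i = i)) => (f i).hom (h.down ▸ a) b)
        (fun h => rtDescF X t x x' i i h.down a b) (PLift.up rfl)
    exact h1.trans h2.symm

theorem preservesLeftWGraph (J : Type) :
    PreservesColimitsOfShape (Discrete J) (tensorLeft X) where
  preservesColimit {K} :=
    haveI : PreservesColimit (Discrete.functor (K.obj ∘ Discrete.mk)) (tensorLeft X) :=
      preservesColimit_of_preserves_colimit_cocone
        (sigmaCofanIsColimit (f := K.obj ∘ Discrete.mk)) (ltMapIsColimit X)
    preservesColimit_of_iso_diagram (tensorLeft X) (Discrete.natIsoFunctor (F := K)).symm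

theorem preservesRightWGraph (J : Type) :
    PreservesColimitsOfShape (Discrete J) (tensorRight X) where
  preservesColimit {K} :=
    haveI : PreservesColimit (Discrete.functor (K.obj ∘ Discrete.mk)) (tensorRight X) :=
      preservesColimit_of_preserves_colimit_cocone
        (sigmaCofanIsColimit (f := K.obj ∘ Discrete.mk)) (rtMapIsColimit X)
    preservesColimit_of_iso_diagram (tensorRight X) (Discrete.natIsoFunctor (F := K)).symm

end Preserve

end StmtFourAux

/-- For a `⊗`-distributive monoidal category `W`, the category `𝒢(W)` of
`W`-graphs is a `⊗`-distributive monoidal category, with tensor product given by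
`(A ⊗ B)₀ = A₀ × B₀` and `(A ⊗ B)((x,y),(x',y')) = A(x,x') ⊗ B(y,y')` (this monoidal
structure is the instance `WGraph.monoidal` constructed above); moreover if `W` is
symmetric monoidal then so is `𝒢(W)`. -/
theorem stmt4 (W : Type u) [Category.{v} W] [MonoidalCategory W] [TensorDistributive W] :
    (∀ A B : WGraph W, ∃ h : (A ⊗ B).V = (A.V × B.V),
      ∀ p q : (A ⊗ B).V,
        (A ⊗ B).hom p q =
          A.hom (cast h p).1 (cast h q).1 ⊗ B.hom (cast h p).2 (cast h q).2) ∧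
    TensorDistributive (WGraph W) ∧
    (∀ _ : SymmetricCategory W, Nonempty (SymmetricCategory (WGraph W))) := by
  refine ⟨fun A B => ⟨rfl, fun p q => rfl⟩, ?_, fun h => ⟨@WGraph.symmetric W _ _ h⟩⟩
  exact ⟨StmtFourAux.hasCoproductsWGraph, fun X J => StmtFourAux.preservesLeftWGraph X J,
    fun X J => StmtFourAux.preservesRightWGraph X J⟩
end
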